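/- arXiv:1809.09225 — 6 statements merged into one kernel-verified Lean document; each statement's English description precedes it below -/
import Mathlib

section
/- Let φ : ℝ³ → ℝ be smooth, harmonic (∂²φ/∂x² + ∂²φ/∂y² + ∂²φ/∂z² = 0 everywhere), 2π-periodic in y and in z, and suppose that ∫₀^{2π} ∂φ/∂x (x,y,z) dz = 0 for all (x,y) ∈ ℝ². Then the z-average g(x,y) = (1/(2π)) ∫₀^{2π} φ(x,y,z) dz is a constant function of (x,y). -/
noncomputable section

open MeasureTheory intervalIntegral Metric Set Filter

/-- Partial derivative with respect to the first coordinate `x` of `ℝ × ℝ × ℝ`. -/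
def pdx (f : ℝ × ℝ × ℝ → ℝ) (p : ℝ × ℝ × ℝ) : ℝ := fderiv ℝ f p (1, 0, 0)

/-- Partial derivative with respect to the second coordinate `y` of `ℝ × ℝ × ℝ`. -/
def pdy (f : ℝ × ℝ × ℝ → ℝ) (p : ℝ × ℝ × ℝ) : ℝ := fderiv ℝ f p (0, 1, 0)

/-- Partial derivative with respect to the third coordinate `z` of `ℝ × ℝ × ℝ`. -/
def pdz (f : ℝ × ℝ × ℝ → ℝ) (p : ℝ × ℝ × ℝ) : ℝ := fderiv ℝ f p (0, 0, 1)

/-- Derivative of a smooth function along a line. -/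
lemma hasDerivAt_comp_line (f : ℝ × ℝ × ℝ → ℝ) (hf : Differentiable ℝ f)
    (c e : ℝ × ℝ × ℝ) (t : ℝ) :
    HasDerivAt (fun s => f (c + s • e)) (fderiv ℝ f (c + t • e) e) t := by
  have h1 : HasDerivAt (fun s : ℝ => c + s • e) e t := by
    simpa using ((hasDerivAt_id t).smul_const e).const_add c
  exact ((hf (c + t • e)).hasFDerivAt).comp_hasDerivAt t h1

/-- Differentiation under the integral sign, along a line, for a smooth integrand. -/
lemma hasDerivAt_param (f : ℝ × ℝ × ℝ → ℝ) (hf : ContDiff ℝ (⊤ : ℕ∞) f)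
    (c e : ℝ × ℝ × ℝ) (a b x₀ : ℝ) :
    HasDerivAt (fun x => ∫ z in a..b, f (c + x • e + z • ((0:ℝ), (0:ℝ), (1:ℝ))))
      (∫ z in a..b, fderiv ℝ f (c + x₀ • e + z • ((0:ℝ), (0:ℝ), (1:ℝ))) e) x₀ := by
  set v : ℝ × ℝ × ℝ := ((0:ℝ), (0:ℝ), (1:ℝ)) with hv
  have hfd : Differentiable ℝ f := hf.differentiable (by simp)
  have hfc : Continuous f := hf.continuous
  have hfderiv : Continuous (fderiv ℝ f) := (hf.fderiv_right (m := (⊤ : ℕ∞)) (by simp)).continuous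
  have hA : Continuous fun p : ℝ × ℝ => c + p.1 • e + p.2 • v := by fun_prop
  have hcont : Continuous fun p : ℝ × ℝ => fderiv ℝ f (c + p.1 • e + p.2 • v) e :=
    (ContinuousLinearMap.apply ℝ ℝ e).continuous.comp (hfderiv.comp hA)
  have hK : IsCompact ((closedBall x₀ 1) ×ˢ (uIcc a b)) :=
    (isCompact_closedBall x₀ 1).prod isCompact_uIcc
  obtain ⟨C, hC⟩ := hK.exists_bound_of_continuousOn hcont.continuousOn
  have hres := intervalIntegral.hasDerivAt_integral_of_dominated_loc_of_deriv_le
    (F := fun x z => f (c + x • e + z • v))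
    (F' := fun x z => fderiv ℝ f (c + x • e + z • v) e)
    (bound := fun _ => C) (μ := volume) (a := a) (b := b) (x₀ := x₀)
    (ball_mem_nhds x₀ one_pos)
    (Eventually.of_forall fun x =>
      (hfc.comp (by fun_prop : Continuous fun z : ℝ => c + x • e + z • v)).aestronglyMeasurable)
    ((hfc.comp (by fun_prop : Continuous fun z : ℝ => c + x₀ • e + z • v)).intervalIntegrable a b)
    ((hcont.comp (by fun_prop : Continuous fun z : ℝ => ((x₀ : ℝ), z))).aestronglyMeasurable)
    (Eventually.of_forall fun t ht x hx => by
      have := hC (x, t) ⟨ball_subset_closedBall hx, uIoc_subset_uIcc ht⟩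
      simpa using this)
    (intervalIntegrable_const)
    (Eventually.of_forall fun t _ x _ => by
      have h := hasDerivAt_comp_line f hfd (c + t • v) e x
      have heq : (fun s : ℝ => f (c + t • v + s • e)) = fun s : ℝ => f (c + s • e + t • v) := by
        funext s; rw [add_right_comm]
      have heq2 : c + t • v + x • e = c + x • e + t • v := add_right_comm _ _ _
      rw [heq, heq2] at h
      exact h)
  exact hres.2

lemma point_eq_x (x y z : ℝ) :
    ((0:ℝ), y, (0:ℝ)) + x • ((1:ℝ), (0:ℝ), (0:ℝ)) + z • ((0:ℝ), (0:ℝ), (1:ℝ)) = (x, y, z) := by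
  simp [Prod.ext_iff]

lemma point_eq_y (x y z : ℝ) :
    (x, (0:ℝ), (0:ℝ)) + y • ((0:ℝ), (1:ℝ), (0:ℝ)) + z • ((0:ℝ), (0:ℝ), (1:ℝ)) = (x, y, z) := by
  simp [Prod.ext_iff]

/-- x-derivative under the integral. -/
lemma key_x (f : ℝ × ℝ × ℝ → ℝ) (hf : ContDiff ℝ (⊤ : ℕ∞) f) (x y a b : ℝ) :
    HasDerivAt (fun x => ∫ z in a..b, f (x, y, z)) (∫ z in a..b, pdx f (x, y, z)) x := by
  have h := hasDerivAt_param f hf (0, y, 0) (1, 0, 0) a b x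
  simp only [point_eq_x] at h
  exact h

/-- y-derivative under the integral. -/
lemma key_y (f : ℝ × ℝ × ℝ → ℝ) (hf : ContDiff ℝ (⊤ : ℕ∞) f) (x y a b : ℝ) :
    HasDerivAt (fun y => ∫ z in a..b, f (x, y, z)) (∫ z in a..b, pdy f (x, y, z)) y := by
  have h := hasDerivAt_param f hf (x, 0, 0) (0, 1, 0) a b y
  simp only [point_eq_y] at h
  exact h

/-- derivative along z. -/
lemma key_z (f : ℝ × ℝ × ℝ → ℝ) (hf : Differentiable ℝ f) (x y z : ℝ) :
    HasDerivAt (fun z => f (x, y, z)) (pdz f (x, y, z)) z := by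
  have h := hasDerivAt_comp_line f hf (x, y, 0) (0, 0, 1) z
  have heq : ((x:ℝ), y, (0:ℝ)) + z • ((0:ℝ), (0:ℝ), (1:ℝ)) = (x, y, z) := by
    simp [Prod.ext_iff]
  have heq2 : (fun s : ℝ => f ((x, y, 0) + s • ((0:ℝ), (0:ℝ), (1:ℝ)))) = fun s => f (x, y, s) := by
    funext s; congr 1; simp [Prod.ext_iff]
  rw [heq2, heq] at h
  exact h

/-- translation invariance of the derivative for a periodic function. -/
lemma fderiv_translate (f : ℝ × ℝ × ℝ → ℝ) (hf : Differentiable ℝ f) (w : ℝ × ℝ × ℝ)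
    (hper : ∀ p, f (p + w) = f p) (p : ℝ × ℝ × ℝ) :
    fderiv ℝ f (p + w) = fderiv ℝ f p := by
  have h1 : HasFDerivAt (fun q => f (q + w)) (fderiv ℝ f (p + w)) p := by
    have := (hf (p + w)).hasFDerivAt.comp p ((hasFDerivAt_id p).add_const w)
    simpa [Function.comp_def] using this
  have h2 : HasFDerivAt f (fderiv ℝ f (p + w)) p := by
    have : (fun q => f (q + w)) = f := funext hper
    rwa [this] at h1
  exact h2.fderiv.symm

/-- The `z`-average of a smooth, doubly periodic harmonic potential whose `x`-derivative
has vanishing `z`-average is a constant function of `(x, y)`. -/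
theorem statement1 (φ : ℝ × ℝ × ℝ → ℝ) (hφ : ContDiff ℝ (⊤ : ℕ∞) φ)
    (hharm : ∀ p : ℝ × ℝ × ℝ, pdx (pdx φ) p + pdy (pdy φ) p + pdz (pdz φ) p = 0)
    (hpery : ∀ x y z : ℝ, φ (x, y + 2 * Real.pi, z) = φ (x, y, z))
    (hperz : ∀ x y z : ℝ, φ (x, y, z + 2 * Real.pi) = φ (x, y, z))
    (havg : ∀ x y : ℝ, (∫ z in (0:ℝ)..(2 * Real.pi), pdx φ (x, y, z)) = 0) :
    ∃ c : ℝ, ∀ x y : ℝ,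
      (1 / (2 * Real.pi)) * (∫ z in (0:ℝ)..(2 * Real.pi), φ (x, y, z)) = c := by
  have hsm' : ∀ f : ℝ × ℝ × ℝ → ℝ, ContDiff ℝ (⊤ : ℕ∞) f →
      ∀ v : ℝ × ℝ × ℝ, ContDiff ℝ (⊤ : ℕ∞) (fun p => fderiv ℝ f p v) := fun f hf v =>
    (hf.fderiv_right (m := (⊤ : ℕ∞)) (by simp)).clm_apply contDiff_const
  have hpdx : ContDiff ℝ (⊤ : ℕ∞) (pdx φ) := hsm' φ hφ (1, 0, 0)
  have hpdy : ContDiff ℝ (⊤ : ℕ∞) (pdy φ) := hsm' φ hφ (0, 1, 0)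
  have hpdz : ContDiff ℝ (⊤ : ℕ∞) (pdz φ) := hsm' φ hφ (0, 0, 1)
  set T : ℝ := 2 * Real.pi with hT
  set g : ℝ → ℝ := fun y => ∫ z in (0:ℝ)..T, φ (0, y, z) with hg
  -- Step 1: the integral does not depend on x
  have step1 : ∀ x y : ℝ, (∫ z in (0:ℝ)..T, φ (x, y, z)) = g y := by
    intro x y
    have hd : ∀ x : ℝ, HasDerivAt (fun x => ∫ z in (0:ℝ)..T, φ (x, y, z)) 0 x := by
      intro x
      have := key_x φ hφ x y 0 T
      rwa [havg x y] at this
    have hdiff : Differentiable ℝ (fun x => ∫ z in (0:ℝ)..T, φ (x, y, z)) :=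
      fun x => (hd x).differentiableAt
    have := is_const_of_deriv_eq_zero hdiff (fun x => (hd x).deriv) x 0
    exact this
  -- Step 2/3: second derivative of g
  set g1 : ℝ → ℝ := fun y => ∫ z in (0:ℝ)..T, pdy φ (0, y, z) with hg1
  have hdg : ∀ y, HasDerivAt g (g1 y) y := fun y => key_y φ hφ 0 y 0 T
  have hdg1 : ∀ y, HasDerivAt g1 (∫ z in (0:ℝ)..T, pdy (pdy φ) (0, y, z)) y :=
    fun y => key_y (pdy φ) hpdy 0 y 0 T
  -- Step 4: that second derivative vanishes
  have step4 : ∀ y : ℝ, (∫ z in (0:ℝ)..T, pdy (pdy φ) (0, y, z)) = 0 := by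
    intro y
    have hxx : (∫ z in (0:ℝ)..T, pdx (pdx φ) (0, y, z)) = 0 := by
      have hd := key_x (pdx φ) hpdx 0 y 0 T
      have h0 : (fun x => ∫ z in (0:ℝ)..T, pdx φ (x, y, z)) = fun _ => (0:ℝ) :=
        funext fun x => havg x y
      rw [h0] at hd
      have := hd.unique (hasDerivAt_const 0 0)
      linarith [this]
    have hzz : (∫ z in (0:ℝ)..T, pdz (pdz φ) (0, y, z)) = 0 := by
      have hftc : (∫ z in (0:ℝ)..T, pdz (pdz φ) (0, y, z))
          = pdz φ (0, y, T) - pdz φ (0, y, 0) := by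
        exact intervalIntegral.integral_eq_sub_of_hasDerivAt
          (f := fun z => pdz φ (0, y, z))
          (fun z _ => key_z (pdz φ) (hpdz.differentiable (by simp)) 0 y z)
          (((hsm' _ hpdz (0,0,1)).continuous.comp
            (by fun_prop : Continuous fun z : ℝ => ((0:ℝ), y, z))).intervalIntegrable 0 T)
      have hper : pdz φ (0, y, T) = pdz φ (0, y, 0) := by
        have hw : ∀ p : ℝ × ℝ × ℝ, φ (p + ((0:ℝ), (0:ℝ), T)) = φ p := by
          rintro ⟨a, b, c⟩
          simpa using hperz a b c
        have := fderiv_translate φ (hφ.differentiable (by simp)) ((0:ℝ), (0:ℝ), T) hw (0, y, 0)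
        have heq : ((0:ℝ), y, (0:ℝ)) + ((0:ℝ), (0:ℝ), T) = ((0:ℝ), y, T) := by
          simp [Prod.ext_iff]
        rw [heq] at this
        simp only [pdz, this]
      rw [hftc, hper, sub_self]
    have hint : ∀ f : ℝ × ℝ × ℝ → ℝ, ContDiff ℝ (⊤ : ℕ∞) f →
        IntervalIntegrable (fun z => f (0, y, z)) volume 0 T := fun f hf =>
      (hf.continuous.comp (by fun_prop : Continuous fun z : ℝ => ((0:ℝ), y, z))).intervalIntegrable 0 T
    have heq : ∀ z : ℝ, pdy (pdy φ) (0, y, z)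
        = (fun z => -pdx (pdx φ) (0, y, z) - pdz (pdz φ) (0, y, z)) z := by
      intro z
      have := hharm (0, y, z)
      simp only
      linarith
    rw [intervalIntegral.integral_congr (fun z _ => heq z)]
    have hA : IntervalIntegrable (fun z => -pdx (pdx φ) (0, y, z)) volume 0 T :=
      (hint _ (hsm' _ hpdx (1, 0, 0))).neg
    have hB : IntervalIntegrable (fun z => pdz (pdz φ) (0, y, z)) volume 0 T :=
      hint _ (hsm' _ hpdz (0, 0, 1))
    rw [intervalIntegral.integral_sub hA hB]
    rw [intervalIntegral.integral_neg, hxx, hzz]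
    ring
  -- Step 5: g1 is a constant, and periodicity forces it to be 0
  have hg1const : ∀ y : ℝ, g1 y = g1 0 := by
    intro y
    have hdiff : Differentiable ℝ g1 := fun y => (hdg1 y).differentiableAt
    exact is_const_of_deriv_eq_zero hdiff
      (fun y => by rw [(hdg1 y).deriv, step4 y]) y 0
  set c1 : ℝ := g1 0 with hc1
  have hgy : ∀ y : ℝ, g y = g 0 + c1 * y := by
    intro y
    have hd : ∀ y : ℝ, HasDerivAt (fun y => g y - c1 * y) 0 y := by
      intro y
      have h1 : HasDerivAt (fun y : ℝ => c1 * y) c1 y := by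
        simpa using (hasDerivAt_id y).const_mul c1
      have := (hdg y).sub h1
      rwa [hg1const y, sub_self] at this
    have hdiff : Differentiable ℝ (fun y => g y - c1 * y) := fun y => (hd y).differentiableAt
    have := is_const_of_deriv_eq_zero hdiff (fun y => (hd y).deriv) y 0
    simp only [mul_zero, sub_zero] at this
    linarith [this]
  have hgper : g T = g 0 := by
    have : ∀ z : ℝ, φ (0, (0:ℝ) + T, z) = φ (0, 0, z) := fun z => hpery 0 0 z
    simp only [hg, zero_add] at this ⊢
    exact intervalIntegral.integral_congr fun z _ => this z
  have hc10 : c1 = 0 := by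
    have h1 := hgy T
    rw [hgper] at h1
    have hTne : T ≠ 0 := by
      simp [hT, Real.pi_ne_zero]
    have : c1 * T = 0 := by linarith
    exact (mul_eq_zero.mp this).resolve_right hTne
  refine ⟨(1 / (2 * Real.pi)) * g 0, fun x y => ?_⟩
  rw [step1 x y, hgy y, hc10]
  ring
end
end

section
/- Let m, n be integers with (m,n) ≠ (0,0), let F⁰ : ℝ → ℝ be twice continuously differentiable and nowhere zero, and let Fx : ℝ → ℝ be twice continuously differentiable, Fy, Fz : ℝ → ℝ continuously differentiable, G : ℝ → ℝ continuously differentiable, satisfying for all x: (i) Fx′ + m·Fy + n·Fz = 0; (ii) G′ = −n·F⁰·Fx; (iii) m·G = n·F⁰·Fy; (iv) n·G = n·F⁰·Fz + F⁰′·Fx. Then for all x, n·[ ( (F⁰(x))² · (Fx/F⁰)′(x) )′ − (m² + n²)·F⁰(x)·Fx(x) ] = 0. -/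
/-!
Equations (i), (iii) and (iv) eliminate `Fy` and `Fz` and give the algebraic identity
`n·(F⁰² (Fx/F⁰)′) = n·(F⁰ Fx′ − F⁰′ Fx) = −(m² + n²)·G`; differentiating it and inserting (ii)
yields the ODE. Keeping the factor `n` on both sides avoids dividing by `n`.
-/

theorem sq_mul_deriv_div {𝕜 𝕜' : Type*} [NontriviallyNormedField 𝕜] [NontriviallyNormedField 𝕜']
    [NormedAlgebra 𝕜 𝕜'] {f g : 𝕜 → 𝕜'} {x : 𝕜} (hf : DifferentiableAt 𝕜 f x)
    (hg : DifferentiableAt 𝕜 g x) (hgx : g x ≠ 0) :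
    g x ^ 2 * deriv (fun s => f s / g s) x = g x * deriv f x - f x * deriv g x := by
  rw [deriv_fun_div hf hg hgx]
  field_simp

theorem statement5_general (m n : ℤ)
    (F0 : ℝ → ℝ) (hF0 : ContDiff ℝ 2 F0) (hF0ne : ∀ x : ℝ, F0 x ≠ 0)
    (Fx : ℝ → ℝ) (hFx : ContDiff ℝ 2 Fx)
    (Fy Fz G : ℝ → ℝ)
    (h1 : ∀ x : ℝ, deriv Fx x + (m : ℝ) * Fy x + (n : ℝ) * Fz x = 0)
    (h2 : ∀ x : ℝ, deriv G x = -(n : ℝ) * F0 x * Fx x)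
    (h3 : ∀ x : ℝ, (m : ℝ) * G x = (n : ℝ) * F0 x * Fy x)
    (h4 : ∀ x : ℝ, (n : ℝ) * G x = (n : ℝ) * F0 x * Fz x + deriv F0 x * Fx x) :
    ∀ x : ℝ, (n : ℝ) *
      (deriv (fun t => (F0 t) ^ 2 * deriv (fun s => Fx s / F0 s) t) x
        - ((m : ℝ) ^ 2 + (n : ℝ) ^ 2) * F0 x * Fx x) = 0 := by
  intro x
  have hFlux : (fun t => (n : ℝ) * ((F0 t) ^ 2 * deriv (fun s => Fx s / F0 s) t))
      = fun t => -((m : ℝ) ^ 2 + (n : ℝ) ^ 2) * G t := by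
    funext t
    rw [sq_mul_deriv_div (hFx.differentiable two_ne_zero t) (hF0.differentiable two_ne_zero t)
      (hF0ne t)]
    linear_combination ((n : ℝ) * F0 t) * h1 t + (m : ℝ) * h3 t + (n : ℝ) * h4 t
  calc (n : ℝ) * (deriv (fun t => (F0 t) ^ 2 * deriv (fun s => Fx s / F0 s) t) x
        - ((m : ℝ) ^ 2 + (n : ℝ) ^ 2) * F0 x * Fx x)
      = deriv (fun t => (n : ℝ) * ((F0 t) ^ 2 * deriv (fun s => Fx s / F0 s) t)) x
        - (n : ℝ) * ((m : ℝ) ^ 2 + (n : ℝ) ^ 2) * F0 x * Fx x := by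
        rw [deriv_const_mul_field]; ring
    _ = deriv (fun t => -((m : ℝ) ^ 2 + (n : ℝ) ^ 2) * G t) x
        - (n : ℝ) * ((m : ℝ) ^ 2 + (n : ℝ) ^ 2) * F0 x * Fx x := by rw [hFlux]
    _ = 0 := by rw [deriv_const_mul_field, h2 x]; ring

/-- The first-order ideal MHD equilibrium equations (4.4a)–(4.4d) imply the second-order
ODE (4.7): `n·[((F⁰)²·(Fx/F⁰)′)′ − (m² + n²)·F⁰·Fx] = 0`. -/
theorem statement5 (m n : ℤ) (hmn : (m, n) ≠ (0, 0))
    (F0 : ℝ → ℝ) (hF0 : ContDiff ℝ 2 F0) (hF0ne : ∀ x : ℝ, F0 x ≠ 0)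
    (Fx : ℝ → ℝ) (hFx : ContDiff ℝ 2 Fx)
    (Fy Fz G : ℝ → ℝ)
    (hFy : ContDiff ℝ 1 Fy) (hFz : ContDiff ℝ 1 Fz) (hG : ContDiff ℝ 1 G)
    (h1 : ∀ x : ℝ, deriv Fx x + (m : ℝ) * Fy x + (n : ℝ) * Fz x = 0)
    (h2 : ∀ x : ℝ, deriv G x = -(n : ℝ) * F0 x * Fx x)
    (h3 : ∀ x : ℝ, (m : ℝ) * G x = (n : ℝ) * F0 x * Fy x)
    (h4 : ∀ x : ℝ, (n : ℝ) * G x = (n : ℝ) * F0 x * Fz x + deriv F0 x * Fx x) :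
    ∀ x : ℝ, (n : ℝ) *
      (deriv (fun t => (F0 t) ^ 2 * deriv (fun s => Fx s / F0 s) t) x
        - ((m : ℝ) ^ 2 + (n : ℝ) ^ 2) * F0 x * Fx x) = 0 :=
  statement5_general m n F0 hF0 hF0ne Fx hFx Fy Fz G h1 h2 h3 h4
end

section
/- Work in ℝ³ with coordinates (x,y,z), standard Euclidean gradient ∇ and cross product ×, and standard basis e₁, e₂, e₃. Let ψ¹, α¹ : ℝ³ → ℝ be continuously differentiable and define the vector field B¹ = ∇x × ∇α¹ + ∇ψ¹ × ∇y (where ∇x = e₁ and ∇y = e₂), and set B⁰ = e₃, ψ⁰(x,y,z) = x, α⁰(x,y,z) = y. Then at every point of ℝ³: B⁰ · ∇ψ¹ + B¹ · ∇ψ⁰ = 0 and B⁰ · ∇α¹ + B¹ · ∇α⁰ = 0. -/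
/-!
Since `B = ∇ψ × ∇α` is perpendicular to both `∇ψ` and `∇α`, the equations `B·∇ψ = 0` and
`B·∇α = 0` hold identically in `(∇ψ, ∇α)`. Their first-order parts about `(∇ψ⁰, ∇α⁰)` are
therefore polynomial identities in four vectors of `ℝ³`, which follow from the cyclic symmetry
and antisymmetry of the triple product. With `ψ⁰ = x`, `α⁰ = y` one has `∇ψ⁰ = e₁`, `∇α⁰ = e₂`
and `B⁰ = e₃ = e₁ × e₂`.
-/

open Matrix

noncomputable section

/-- Points of ℝ³ as functions `Fin 3 → ℝ`; coordinates `(x, y, z) = (p 0, p 1, p 2)`. -/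
abbrev E3 := Fin 3 → ℝ

/-- Standard basis vectors of ℝ³. -/
def e3 (i : Fin 3) : E3 := Pi.single i 1

/-- Euclidean gradient of a scalar field on ℝ³. -/
def grad3 (f : E3 → ℝ) (p : E3) : E3 := fun i => fderiv ℝ f p (e3 i)

section LinearizedClebsch

variable {R : Type*} [CommRing R] (a₀ b₀ a₁ b₁ : Fin 3 → R)

theorem cross_dotProduct_add_cross_add_cross_dotProduct_left :
    a₀ ⨯₃ b₀ ⬝ᵥ a₁ + (a₀ ⨯₃ b₁ + a₁ ⨯₃ b₀) ⬝ᵥ a₀ = 0 := by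
  have h : a₀ ⬝ᵥ a₁ ⨯₃ b₀ = -(a₁ ⬝ᵥ a₀ ⨯₃ b₀) := by
    rw [triple_product_permutation, ← cross_anticomm, dotProduct_neg]
  rw [add_dotProduct, dotProduct_comm (a₀ ⨯₃ b₀), dotProduct_comm (a₀ ⨯₃ b₁),
    dotProduct_comm (a₁ ⨯₃ b₀), dot_self_cross, h]
  ring

theorem cross_dotProduct_add_cross_add_cross_dotProduct_right :
    a₀ ⨯₃ b₀ ⬝ᵥ b₁ + (a₀ ⨯₃ b₁ + a₁ ⨯₃ b₀) ⬝ᵥ b₀ = 0 := by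
  have h : b₀ ⬝ᵥ a₀ ⨯₃ b₁ = -(b₁ ⬝ᵥ a₀ ⨯₃ b₀) := by
    rw [triple_product_permutation, triple_product_permutation b₁, ← cross_anticomm,
      dotProduct_neg]
  rw [add_dotProduct, dotProduct_comm (a₀ ⨯₃ b₀), dotProduct_comm (a₀ ⨯₃ b₁),
    dotProduct_comm (a₁ ⨯₃ b₀), dot_cross_self, h]
  ring

end LinearizedClebsch

theorem grad3_coord (i : Fin 3) (p : E3) : grad3 (fun q : E3 => q i) p = e3 i := by
  funext j
  have hproj : fderiv ℝ (fun q : E3 => q i) p = ContinuousLinearMap.proj i :=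
    (ContinuousLinearMap.proj i : E3 →L[ℝ] ℝ).fderiv
  simp [grad3, hproj, e3, Pi.single_apply, eq_comm]

theorem e3_zero_cross_e3_one : e3 0 ⨯₃ e3 1 = e3 2 := by
  ext i
  fin_cases i <;> simp [e3, cross_apply]

theorem statement7_general (ψ1 α1 : E3 → ℝ)
    (B1 : E3 → E3)
    (hB1 : ∀ p : E3, B1 p = crossProduct (e3 0) (grad3 α1 p)
                            + crossProduct (grad3 ψ1 p) (e3 1))
    (B0 : E3) (hB0 : B0 = e3 2)
    (ψ0 α0 : E3 → ℝ)
    (hψ0 : ψ0 = fun p => p 0) (hα0 : α0 = fun p => p 1) :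
    ∀ p : E3,
      B0 ⬝ᵥ grad3 ψ1 p + B1 p ⬝ᵥ grad3 ψ0 p = 0 ∧
      B0 ⬝ᵥ grad3 α1 p + B1 p ⬝ᵥ grad3 α0 p = 0 := by
  intro p
  subst hB0 hψ0 hα0
  rw [hB1, grad3_coord, grad3_coord, ← e3_zero_cross_e3_one]
  exact ⟨cross_dotProduct_add_cross_add_cross_dotProduct_left _ _ _ _,
    cross_dotProduct_add_cross_add_cross_dotProduct_right _ _ _ _⟩

/-- With `B⁰ = e₃`, `ψ⁰ = x`, `α⁰ = y`, the first-order field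
`B¹ = ∇x × ∇α¹ + ∇ψ¹ × ∇y` satisfies both linearized magnetic differential equations
`B⁰·∇ψ¹ + B¹·∇ψ⁰ = 0` and `B⁰·∇α¹ + B¹·∇α⁰ = 0`. -/
theorem statement7 (ψ1 α1 : E3 → ℝ)
    (hψ1 : ContDiff ℝ 1 ψ1) (hα1 : ContDiff ℝ 1 α1)
    (B1 : E3 → E3)
    (hB1 : ∀ p : E3, B1 p = crossProduct (e3 0) (grad3 α1 p)
                            + crossProduct (grad3 ψ1 p) (e3 1))
    (B0 : E3) (hB0 : B0 = e3 2)
    (ψ0 α0 : E3 → ℝ)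
    (hψ0 : ψ0 = fun p => p 0) (hα0 : α0 = fun p => p 1) :
    ∀ p : E3,
      B0 ⬝ᵥ grad3 ψ1 p + B1 p ⬝ᵥ grad3 ψ0 p = 0 ∧
      B0 ⬝ᵥ grad3 α1 p + B1 p ⬝ᵥ grad3 α0 p = 0 :=
  statement7_general ψ1 α1 B1 hB1 B0 hB0 ψ0 α0 hψ0 hα0
end
end

section
/- Let m, n be integers with (m,n) ≠ (0,0), set ω(y,z) = m y + n z, let F⁰ : ℝ → ℝ be continuously differentiable, and let Fx, Fy, Fz, G : ℝ → ℝ be continuously differentiable. Define on ℝ³ the vector fields B⁰(x,y,z) = (0, 0, F⁰(x)) and B¹(x,y,z) = (Fx(x) cos ω, Fy(x) sin ω, Fz(x) sin ω), and the scalar Π¹(x,y,z) = G(x) sin ω. Then the pair of first-order equations ∇·B¹ = 0 and ∇Π¹ = (B⁰·∇)B¹ + (B¹·∇)B⁰ holds at every point of ℝ³ if and only if for every x: (i) Fx′ + m·Fy + n·Fz = 0; (ii) G′ = −n·F⁰·Fx; (iii) m·G = n·F⁰·Fy; (iv) n·G = n·F⁰·Fz + F⁰′·Fx. -/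
open Matrix

noncomputable section

/-- Divergence of a vector field on ℝ³. -/
def div3 (B : E3 → E3) (p : E3) : ℝ := ∑ i : Fin 3, fderiv ℝ (fun q => B q i) p (e3 i)

/-! The perturbation is a single Fourier mode in the phase `ω = m y + n z`, so every first-order
term is a function of `x` times `cos ω` or `sin ω`: `∇·B¹ = (Fx' + m Fy + n Fz) cos ω`, and the
three components of `∇Π¹ - (B⁰·∇)B¹ - (B¹·∇)B⁰` are the residuals of (ii), (iii), (iv) times
`sin ω`, `cos ω`, `cos ω`. Since `(m, n) ≠ (0, 0)`, the pair `(x, ω)` takes every value in `ℝ²`,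
and evaluating at `ω = 0` and `ω = π/2` shows that each residual vanishes. -/

open ContinuousLinearMap Real

lemma hasFDerivAt_phase (m n : ℝ) (p : E3) :
    HasFDerivAt (fun q : E3 => m * q 1 + n * q 2)
      (m • proj (R := ℝ) 1 + n • proj (R := ℝ) 2 : E3 →L[ℝ] ℝ) p :=
  (m • proj 1 + n • proj 2 : E3 →L[ℝ] ℝ).hasFDerivAt

lemma hasFDerivAt_mode (m n : ℝ) {f s : ℝ → ℝ} {f' s' : ℝ} {p : E3}
    (hf : HasDerivAt f f' (p 0)) (hs : HasDerivAt s s' (m * p 1 + n * p 2)) :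
    HasFDerivAt (fun q : E3 => f (q 0) * s (m * q 1 + n * q 2))
      (f (p 0) • s' • (m • proj (R := ℝ) 1 + n • proj (R := ℝ) 2 : E3 →L[ℝ] ℝ)
        + s (m * p 1 + n * p 2) • f' • (proj 0 : E3 →L[ℝ] ℝ)) p :=
  (hf.comp_hasFDerivAt p (hasFDerivAt_apply 0 p)).mul
    (hs.comp_hasFDerivAt p (hasFDerivAt_phase m n p))

lemma fderiv_mode_apply (m n : ℝ) {f s : ℝ → ℝ} {s' : ℝ} {p : E3}
    (hf : DifferentiableAt ℝ f (p 0)) (hs : HasDerivAt s s' (m * p 1 + n * p 2)) (v : E3) :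
    fderiv ℝ (fun q : E3 => f (q 0) * s (m * q 1 + n * q 2)) p v
      = deriv f (p 0) * v 0 * s (m * p 1 + n * p 2) + f (p 0) * s' * (m * v 1 + n * v 2) := by
  rw [(hasFDerivAt_mode m n hf.hasDerivAt hs).fderiv]
  simp only [_root_.add_apply, _root_.smul_apply, proj_apply, smul_eq_mul]
  ring

lemma fderiv_apply_apply {ι E : Type*} [Fintype ι] [NormedAddCommGroup E] [NormedSpace ℝ E]
    {Φ : E → ι → ℝ} {p : E} (hΦ : DifferentiableAt ℝ Φ p) (v : E) (i : ι) :
    fderiv ℝ Φ p v i = fderiv ℝ (fun q => Φ q i) p v := by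
  rw [fderiv_apply hΦ]
  rfl

def backgroundField (F0 : ℝ → ℝ) : E3 → E3 := fun q => ![0, 0, F0 (q 0)]

def perturbationField (m n : ℝ) (Fx Fy Fz : ℝ → ℝ) : E3 → E3 := fun q =>
  ![Fx (q 0) * cos (m * q 1 + n * q 2), Fy (q 0) * sin (m * q 1 + n * q 2),
    Fz (q 0) * sin (m * q 1 + n * q 2)]

def perturbationPressure (m n : ℝ) (G : ℝ → ℝ) : E3 → ℝ := fun q =>
  G (q 0) * sin (m * q 1 + n * q 2)

/-- `∇·B¹ = 0` and the three components of `∇Π¹ = (B⁰·∇)B¹ + (B¹·∇)B⁰` at a point with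
`x`-coordinate `x` and phase `ω = t`. -/
def ModeEquationsAt (m n : ℝ) (F0 Fx Fy Fz G : ℝ → ℝ) (x t : ℝ) : Prop :=
  (deriv Fx x + m * Fy x + n * Fz x) * cos t = 0 ∧
  (deriv G x + n * F0 x * Fx x) * sin t = 0 ∧
  (m * G x - n * F0 x * Fy x) * cos t = 0 ∧
  (n * G x - n * F0 x * Fz x - deriv F0 x * Fx x) * cos t = 0

section Fields

variable (m n : ℝ) {F0 Fx Fy Fz G : ℝ → ℝ} {p : E3}

lemma div3_perturbationField (hFx : DifferentiableAt ℝ Fx (p 0))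
    (hFy : DifferentiableAt ℝ Fy (p 0)) (hFz : DifferentiableAt ℝ Fz (p 0)) :
    div3 (perturbationField m n Fx Fy Fz) p
      = (deriv Fx (p 0) + m * Fy (p 0) + n * Fz (p 0)) * cos (m * p 1 + n * p 2) := by
  simp only [div3, perturbationField, Fin.sum_univ_three, Matrix.cons_val_zero,
    Matrix.cons_val_one, Matrix.cons_val_two, Matrix.head_cons, Matrix.tail_cons]
  rw [fderiv_mode_apply m n hFx (hasDerivAt_cos _), fderiv_mode_apply m n hFy (hasDerivAt_sin _),
    fderiv_mode_apply m n hFz (hasDerivAt_sin _)]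
  simp only [e3, Pi.single_apply, Fin.reduceEq, if_true, if_false]
  ring

lemma grad3_perturbationPressure (hG : DifferentiableAt ℝ G (p 0)) :
    grad3 (perturbationPressure m n G) p
      = ![deriv G (p 0) * sin (m * p 1 + n * p 2), m * G (p 0) * cos (m * p 1 + n * p 2),
          n * G (p 0) * cos (m * p 1 + n * p 2)] := by
  ext i
  unfold grad3 perturbationPressure
  rw [fderiv_mode_apply m n hG (hasDerivAt_sin _)]
  fin_cases i <;> simp [e3] <;> ring

lemma fderiv_perturbationField_apply_vertical (hFx : DifferentiableAt ℝ Fx (p 0))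
    (hFy : DifferentiableAt ℝ Fy (p 0)) (hFz : DifferentiableAt ℝ Fz (p 0)) (c : ℝ) :
    fderiv ℝ (perturbationField m n Fx Fy Fz) p ![0, 0, c]
      = (n * c) • ![-Fx (p 0) * sin (m * p 1 + n * p 2), Fy (p 0) * cos (m * p 1 + n * p 2),
          Fz (p 0) * cos (m * p 1 + n * p 2)] := by
  have hX := (hasFDerivAt_mode m n hFx.hasDerivAt (hasDerivAt_cos _)).differentiableAt
  have hY := (hasFDerivAt_mode m n hFy.hasDerivAt (hasDerivAt_sin _)).differentiableAt
  have hZ := (hasFDerivAt_mode m n hFz.hasDerivAt (hasDerivAt_sin _)).differentiableAt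
  have hB : DifferentiableAt ℝ (perturbationField m n Fx Fy Fz) p :=
    differentiableAt_pi.2 fun i => by fin_cases i <;> assumption
  ext i
  rw [fderiv_apply_apply hB]
  fin_cases i <;> simp [perturbationField, fderiv_mode_apply m n hFx (hasDerivAt_cos _),
    fderiv_mode_apply m n hFy (hasDerivAt_sin _), fderiv_mode_apply m n hFz (hasDerivAt_sin _)]
    <;> ring

lemma fderiv_backgroundField_apply (hF0 : DifferentiableAt ℝ F0 (p 0)) (v : E3) :
    fderiv ℝ (backgroundField F0) p v = ![0, 0, deriv F0 (p 0) * v 0] := by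
  have h0 : HasFDerivAt (fun q : E3 => F0 (q 0)) (deriv F0 (p 0) • (proj 0 : E3 →L[ℝ] ℝ)) p :=
    hF0.hasDerivAt.comp_hasFDerivAt p (hasFDerivAt_apply 0 p)
  have hB : DifferentiableAt ℝ (backgroundField F0) p :=
    differentiableAt_pi.2 fun i => by
      fin_cases i
      exacts [differentiableAt_const 0, differentiableAt_const 0, h0.differentiableAt]
  ext i
  rw [fderiv_apply_apply hB]
  fin_cases i <;> simp [backgroundField, h0.fderiv]

lemma equilibrium_iff_modeEquationsAt (hF0 : DifferentiableAt ℝ F0 (p 0))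
    (hFx : DifferentiableAt ℝ Fx (p 0)) (hFy : DifferentiableAt ℝ Fy (p 0))
    (hFz : DifferentiableAt ℝ Fz (p 0)) (hG : DifferentiableAt ℝ G (p 0)) :
    (div3 (perturbationField m n Fx Fy Fz) p = 0 ∧
      grad3 (perturbationPressure m n G) p
        = fderiv ℝ (perturbationField m n Fx Fy Fz) p (backgroundField F0 p)
          + fderiv ℝ (backgroundField F0) p (perturbationField m n Fx Fy Fz p)) ↔
      ModeEquationsAt m n F0 Fx Fy Fz G (p 0) (m * p 1 + n * p 2) := by
  rw [div3_perturbationField m n hFx hFy hFz, grad3_perturbationPressure m n hG,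
    backgroundField, fderiv_perturbationField_apply_vertical m n hFx hFy hFz,
    fderiv_backgroundField_apply hF0]
  simp only [ModeEquationsAt, perturbationField, Matrix.cons_val_zero, Matrix.smul_cons,
    Matrix.smul_empty, Matrix.cons_add_cons, Matrix.empty_add_empty, Matrix.vecCons_inj,
    smul_eq_mul, and_true]
  refine and_congr Iff.rfl (and_congr ?_ (and_congr ?_ ?_)) <;> rw [← sub_eq_zero] <;> ring_nf

end Fields

lemma exists_coord_phase_eq {m n : ℝ} (hmn : m ≠ 0 ∨ n ≠ 0) (x t : ℝ) :
    ∃ p : E3, p 0 = x ∧ m * p 1 + n * p 2 = t := by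
  rcases hmn with hm | hn
  · exact ⟨![x, t / m, 0], rfl, by simp [mul_div_cancel₀ t hm]⟩
  · exact ⟨![x, 0, t / n], rfl, by simp [mul_div_cancel₀ t hn]⟩

lemma forall_iff_forall_coord_phase {m n : ℝ} (hmn : m ≠ 0 ∨ n ≠ 0) {P : ℝ → ℝ → Prop} :
    (∀ p : E3, P (p 0) (m * p 1 + n * p 2)) ↔ ∀ x t, P x t := by
  refine ⟨fun h x t => ?_, fun h p => h _ _⟩
  obtain ⟨p, rfl, rfl⟩ := exists_coord_phase_eq hmn x t
  exact h p

lemma forall_modeEquationsAt_iff (m n : ℝ) (F0 Fx Fy Fz G : ℝ → ℝ) (x : ℝ) :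
    (∀ t, ModeEquationsAt m n F0 Fx Fy Fz G x t) ↔
      deriv Fx x + m * Fy x + n * Fz x = 0 ∧
      deriv G x = -n * F0 x * Fx x ∧
      m * G x = n * F0 x * Fy x ∧
      n * G x = n * F0 x * Fz x + deriv F0 x * Fx x := by
  constructor
  · intro h
    obtain ⟨h₁, -, h₃, h₄⟩ := h 0
    obtain ⟨-, h₂, -, -⟩ := h (π / 2)
    simp only [cos_zero, sin_pi_div_two, mul_one] at h₁ h₂ h₃ h₄
    exact ⟨h₁, by linarith, by linarith, by linarith⟩
  · rintro ⟨h₁, h₂, h₃, h₄⟩ t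
    exact ⟨by rw [h₁, zero_mul], by rw [h₂]; ring, by rw [h₃]; ring, by rw [h₄]; ring⟩

/-- The first-order ideal MHD equilibrium equations `∇·B¹ = 0`,
`∇Π¹ = (B⁰·∇)B¹ + (B¹·∇)B⁰` for the single-mode perturbation with `ω = m y + n z`
hold everywhere if and only if the ODE system (4.4a)–(4.4d) holds for every `x`. -/
theorem statement10 (m n : ℤ) (hmn : (m, n) ≠ (0, 0))
    (F0 Fx Fy Fz G : ℝ → ℝ)
    (hF0 : ContDiff ℝ 1 F0) (hFx : ContDiff ℝ 1 Fx) (hFy : ContDiff ℝ 1 Fy)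
    (hFz : ContDiff ℝ 1 Fz) (hG : ContDiff ℝ 1 G)
    (B0 B1 : E3 → E3) (Pi1 : E3 → ℝ)
    (hB0 : ∀ p : E3, B0 p = ![0, 0, F0 (p 0)])
    (hB1 : ∀ p : E3, B1 p =
      ![Fx (p 0) * Real.cos ((m : ℝ) * p 1 + (n : ℝ) * p 2),
        Fy (p 0) * Real.sin ((m : ℝ) * p 1 + (n : ℝ) * p 2),
        Fz (p 0) * Real.sin ((m : ℝ) * p 1 + (n : ℝ) * p 2)])
    (hPi1 : ∀ p : E3, Pi1 p = G (p 0) * Real.sin ((m : ℝ) * p 1 + (n : ℝ) * p 2)) :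
    ((∀ p : E3, div3 B1 p = 0) ∧
     (∀ p : E3, grad3 Pi1 p = fderiv ℝ B1 p (B0 p) + fderiv ℝ B0 p (B1 p)))
    ↔ (∀ x : ℝ,
        deriv Fx x + (m : ℝ) * Fy x + (n : ℝ) * Fz x = 0 ∧
        deriv G x = -(n : ℝ) * F0 x * Fx x ∧
        (m : ℝ) * G x = (n : ℝ) * F0 x * Fy x ∧
        (n : ℝ) * G x = (n : ℝ) * F0 x * Fz x + deriv F0 x * Fx x) := by
  obtain rfl : B0 = backgroundField F0 := funext hB0
  obtain rfl : B1 = perturbationField m n Fx Fy Fz := funext hB1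
  obtain rfl : Pi1 = perturbationPressure m n G := funext hPi1
  have hmn' : (m : ℝ) ≠ 0 ∨ (n : ℝ) ≠ 0 := by
    simpa only [ne_eq, Prod.mk.injEq, not_and_or, Int.cast_eq_zero] using hmn
  have hd {f : ℝ → ℝ} (hf : ContDiff ℝ 1 f) (x : ℝ) : DifferentiableAt ℝ f x :=
    hf.differentiable one_ne_zero x
  rw [← forall_and, forall_congr' fun p => equilibrium_iff_modeEquationsAt m n (hd hF0 _)
    (hd hFx _) (hd hFy _) (hd hFz _) (hd hG _), forall_iff_forall_coord_phase hmn']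
  exact forall_congr' fun x => forall_modeEquationsAt_iff m n F0 Fx Fy Fz G x
end
end

section
/- Let m, n be integers with (m,n) ≠ (0,0), set ω(y,z) = m y + n z, and let Fx, Fy, Fz, Gx, Gy, Gz : ℝ → ℝ be continuously differentiable. Define on ℝ³ the vector fields B(x,y,z) = (Fx(x) cos ω, Fy(x) sin ω, Fz(x) sin ω) and C(x,y,z) = (Gx(x) cos ω, Gy(x) sin ω, Gz(x) sin ω). Then for every x ∈ ℝ, ∫₀^{2π} ∫₀^{2π} [ (B·∇)C + (C·∇)B ]_y (x,y,z) dy dz = 0, where [·]_y denotes the y-component. -/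
/-!
In `(B·∇)C_y = B_x ∂ₓC_y + (B_y ∂_y + B_z ∂_z) C_y`, the first term is `cos ω · sin ω` (since
`B_x ∝ cos ω`, `C_y ∝ sin ω`) and so is the second (the angular derivatives turn `sin ω` into
`cos ω`, while `B_y, B_z ∝ sin ω`). Hence the `y`-component of `(B·∇)C + (C·∇)B` is a constant
multiple of `sin 2ω`, and `sin (2m y + 2n z)` integrates to zero over the torus for all integers.
-/

open Matrix

noncomputable section

open Real

lemma integral_sin_int_mul_add {k : ℤ} (hk : k ≠ 0) (c : ℝ) :
    ∫ y in (0:ℝ)..2 * π, sin (k * y + c) = 0 := by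
  rw [intervalIntegral.integral_comp_mul_add sin (Int.cast_ne_zero.mpr hk), integral_sin,
    add_comm (k * (2 * π)) c, cos_add_int_mul_two_pi]
  simp

lemma integral_integral_sin_int_mul_add_int_mul (m n : ℤ) :
    ∫ z in (0:ℝ)..2 * π, ∫ y in (0:ℝ)..2 * π, sin (m * y + n * z) = 0 := by
  rcases eq_or_ne m 0 with rfl | hm
  · rcases eq_or_ne n 0 with rfl | hn
    · simp
    · simpa using integral_sin_int_mul_add hn 0
  · simp [integral_sin_int_mul_add hm]

lemma fderiv_mul_comp_phase_apply {F T : ℝ → ℝ} {T' : ℝ} (a b : ℝ) {p : E3}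
    (hF : DifferentiableAt ℝ F (p 0)) (hT : HasDerivAt T T' (a * p 1 + b * p 2)) (v : E3) :
    fderiv ℝ (fun q : E3 => F (q 0) * T (a * q 1 + b * q 2)) p v =
      deriv F (p 0) * v 0 * T (a * p 1 + b * p 2) + F (p 0) * T' * (a * v 1 + b * v 2) := by
  let phase : E3 →L[ℝ] ℝ := a • .proj 1 + b • .proj 2
  have hx : HasFDerivAt (fun q : E3 => q 0) (.proj (R := ℝ) 0) p := hasFDerivAt_apply 0 p
  have hF' := hF.hasDerivAt.comp_hasFDerivAt p hx
  have hT' := hT.comp_hasFDerivAt p phase.hasFDerivAt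
  have hmul : HasFDerivAt (fun q : E3 => F (q 0) * T (a * q 1 + b * q 2)) _ p := hF'.mul hT'
  rw [hmul.fderiv]
  simp only [Function.comp_apply, smul_add, _root_.add_apply, _root_.smul_apply,
    ContinuousLinearMap.proj_apply, smul_eq_mul, phase]
  ring

lemma fderiv_apply_one_of_eq_single_mode {G₀ G₁ G₂ : ℝ → ℝ} (a b : ℝ)
    (h₀ : Differentiable ℝ G₀) (h₁ : Differentiable ℝ G₁) (h₂ : Differentiable ℝ G₂)
    {C : E3 → E3}
    (hC : ∀ q : E3, C q = ![G₀ (q 0) * cos (a * q 1 + b * q 2),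
        G₁ (q 0) * sin (a * q 1 + b * q 2), G₂ (q 0) * sin (a * q 1 + b * q 2)])
    (p v : E3) :
    fderiv ℝ C p v 1 = deriv G₁ (p 0) * v 0 * sin (a * p 1 + b * p 2) +
      G₁ (p 0) * cos (a * p 1 + b * p 2) * (a * v 1 + b * v 2) := by
  have hC' : C = fun q i => ![G₀ (q 0) * cos (a * q 1 + b * q 2),
      G₁ (q 0) * sin (a * q 1 + b * q 2), G₂ (q 0) * sin (a * q 1 + b * q 2)] i :=
    funext hC
  have hdiff : ∀ i, DifferentiableAt ℝ (fun q : E3 => ![G₀ (q 0) * cos (a * q 1 + b * q 2),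
      G₁ (q 0) * sin (a * q 1 + b * q 2), G₂ (q 0) * sin (a * q 1 + b * q 2)] i) p := by
    intro i; fin_cases i <;> simp <;> fun_prop
  rw [hC', fderiv_pi hdiff]
  simpa using fderiv_mul_comp_phase_apply a b (h₁ _) (hasDerivAt_sin _) v

theorem statement12_general (m n : ℤ)
    (Fx Fy Fz Gx Gy Gz : ℝ → ℝ)
    (hFx : ContDiff ℝ 1 Fx) (hFy : ContDiff ℝ 1 Fy) (hFz : ContDiff ℝ 1 Fz)
    (hGx : ContDiff ℝ 1 Gx) (hGy : ContDiff ℝ 1 Gy) (hGz : ContDiff ℝ 1 Gz)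
    (B C : E3 → E3)
    (hB : ∀ p : E3, B p =
      ![Fx (p 0) * Real.cos ((m : ℝ) * p 1 + (n : ℝ) * p 2),
        Fy (p 0) * Real.sin ((m : ℝ) * p 1 + (n : ℝ) * p 2),
        Fz (p 0) * Real.sin ((m : ℝ) * p 1 + (n : ℝ) * p 2)])
    (hC : ∀ p : E3, C p =
      ![Gx (p 0) * Real.cos ((m : ℝ) * p 1 + (n : ℝ) * p 2),
        Gy (p 0) * Real.sin ((m : ℝ) * p 1 + (n : ℝ) * p 2),
        Gz (p 0) * Real.sin ((m : ℝ) * p 1 + (n : ℝ) * p 2)]) :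
    ∀ x : ℝ, (∫ z in (0:ℝ)..(2 * Real.pi), ∫ y in (0:ℝ)..(2 * Real.pi),
      (fderiv ℝ C ![x, y, z] (B ![x, y, z]) + fderiv ℝ B ![x, y, z] (C ![x, y, z])) 1) = 0 := by
  intro x
  have hdiff {f : ℝ → ℝ} (hf : ContDiff ℝ 1 f) : Differentiable ℝ f :=
    hf.differentiable one_ne_zero
  obtain ⟨K, hy⟩ : ∃ K : ℝ, ∀ y z : ℝ,
      (fderiv ℝ C ![x, y, z] (B ![x, y, z]) + fderiv ℝ B ![x, y, z] (C ![x, y, z])) 1 =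
        K * sin ((2 * m : ℤ) * y + (2 * n : ℤ) * z) := by
    refine ⟨(deriv Gy x * Fx x + Gy x * (m * Fy x + n * Fz x) +
      deriv Fy x * Gx x + Fy x * (m * Gy x + n * Gz x)) / 2, fun y z => ?_⟩
    rw [Pi.add_apply,
      fderiv_apply_one_of_eq_single_mode _ _ (hdiff hGx) (hdiff hGy) (hdiff hGz) hC,
      fderiv_apply_one_of_eq_single_mode _ _ (hdiff hFx) (hdiff hFy) (hdiff hFz) hB, hB, hC]
    push_cast
    rw [show 2 * (m : ℝ) * y + 2 * n * z = 2 * (m * y + n * z) by ring, sin_two_mul]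
    ring
  simp only [hy, intervalIntegral.integral_const_mul,
    integral_integral_sin_int_mul_add_int_mul, mul_zero]

/-- For two single-mode fields with the same phase `ω = m y + n z`, the `y`-component of
`(B·∇)C + (C·∇)B` has vanishing average over both angles. -/
theorem statement12 (m n : ℤ) (hmn : (m, n) ≠ (0, 0))
    (Fx Fy Fz Gx Gy Gz : ℝ → ℝ)
    (hFx : ContDiff ℝ 1 Fx) (hFy : ContDiff ℝ 1 Fy) (hFz : ContDiff ℝ 1 Fz)
    (hGx : ContDiff ℝ 1 Gx) (hGy : ContDiff ℝ 1 Gy) (hGz : ContDiff ℝ 1 Gz)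
    (B C : E3 → E3)
    (hB : ∀ p : E3, B p =
      ![Fx (p 0) * Real.cos ((m : ℝ) * p 1 + (n : ℝ) * p 2),
        Fy (p 0) * Real.sin ((m : ℝ) * p 1 + (n : ℝ) * p 2),
        Fz (p 0) * Real.sin ((m : ℝ) * p 1 + (n : ℝ) * p 2)])
    (hC : ∀ p : E3, C p =
      ![Gx (p 0) * Real.cos ((m : ℝ) * p 1 + (n : ℝ) * p 2),
        Gy (p 0) * Real.sin ((m : ℝ) * p 1 + (n : ℝ) * p 2),
        Gz (p 0) * Real.sin ((m : ℝ) * p 1 + (n : ℝ) * p 2)]) :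
    ∀ x : ℝ, (∫ z in (0:ℝ)..(2 * Real.pi), ∫ y in (0:ℝ)..(2 * Real.pi),
      (fderiv ℝ C ![x, y, z] (B ![x, y, z]) + fderiv ℝ B ![x, y, z] (C ![x, y, z])) 1) = 0 :=
  statement12_general m n Fx Fy Fz Gx Gy Gz hFx hFy hFz hGx hGy hGz B C hB hC
end
end

section
/- Let U ⊆ ℝ² be open, let α⁰, α¹ : U → ℝ be continuously differentiable with ∂α⁰/∂y (p) ≠ 0 or ∂α⁰/∂z (p) ≠ 0 at a point p ∈ U, and suppose that (∂α⁰/∂y)(∂α¹/∂z) − (∂α⁰/∂z)(∂α¹/∂y) = 0 everywhere on U. Then there exist an open neighborhood V ⊆ U of p and a continuously differentiable function h : ℝ → ℝ such that α¹ = h ∘ α⁰ on V. -/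
/-!
Near `p`, the map `q ↦ (ℓ q, α⁰ q)`, where `ℓ` is the gradient of `α⁰` at `p` rotated by a right
angle, is a `C¹` chart by the inverse function theorem. The Jacobian condition says that `dα¹`
vanishes on `ker dα⁰`, so in this chart `α¹` has zero derivative along the first coordinate; on a
ball it is therefore a function of the second coordinate `α⁰` alone. A bump function extends that
one-variable `C¹` function to all of `ℝ`.
-/

noncomputable section

/-- Partial derivative with respect to the first coordinate `y` of `ℝ × ℝ`. -/
def pdy2 (f : ℝ × ℝ → ℝ) (p : ℝ × ℝ) : ℝ := fderiv ℝ f p (1, 0)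

/-- Partial derivative with respect to the second coordinate `z` of `ℝ × ℝ`. -/
def pdz2 (f : ℝ × ℝ → ℝ) (p : ℝ × ℝ) : ℝ := fderiv ℝ f p (0, 1)

open Set Filter Topology Metric

theorem ContDiffAt.exists_contDiff_eventuallyEq {E F : Type*} [NormedAddCommGroup E]
    [NormedSpace ℝ E] [HasContDiffBump E] [NormedAddCommGroup F] [NormedSpace ℝ F]
    {f : E → F} {x : E} {n : ℕ} (hf : ContDiffAt ℝ n f x) :
    ∃ g : E → F, ContDiff ℝ n g ∧ g =ᶠ[𝓝 x] f := by
  obtain ⟨u, hu, hfu⟩ := hf.contDiffOn le_rfl (by simp)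
  obtain ⟨r, hr, hru⟩ := Metric.mem_nhds_iff.1 hu
  let ψ : ContDiffBump x := ⟨r / 4, r / 2, by positivity, by linarith⟩
  refine ⟨fun y => ψ y • f y, contDiff_iff_contDiffAt.2 fun y => ?_, ?_⟩
  · by_cases hy : y ∈ tsupport ψ
    · rw [ψ.tsupport_eq] at hy
      have hyu : u ∈ 𝓝 y :=
        mem_of_superset (isOpen_ball.mem_nhds (closedBall_subset_ball (half_lt_self hr) hy)) hru
      exact ψ.contDiff.contDiffAt.smul (hfu.contDiffAt hyu)
    · refine contDiffAt_const (c := (0 : F)).congr_of_eventuallyEq ?_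
      filter_upwards [notMem_tsupport_iff_eventuallyEq.1 hy] with z hz
      simp [hz]
  · filter_upwards [ball_mem_nhds x ψ.rIn_pos] with y hy
    simp [ψ.one_of_mem_closedBall (ball_subset_closedBall hy)]

theorem eventually_eq_apply_mk_of_fderiv_fst_eq_zero {F G H : Type*}
    [NormedAddCommGroup F] [NormedSpace ℝ F] [NormedAddCommGroup G] [NormedSpace ℝ G]
    [NormedAddCommGroup H] [NormedSpace ℝ H] {Θ : F × G → H} {x₀ : F × G}
    (hΘ : ∀ᶠ x in 𝓝 x₀, DifferentiableAt ℝ Θ x ∧ ∀ v : F, fderiv ℝ Θ x (v, 0) = 0) :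
    ∀ᶠ x in 𝓝 x₀, Θ x = Θ (x₀.1, x.2) := by
  obtain ⟨r, hr, hball⟩ := Metric.mem_nhds_iff.1 hΘ
  filter_upwards [ball_mem_nhds x₀ hr] with x hx
  rw [← ball_prod_same] at hx
  have hslice : ∀ u ∈ ball x₀.1 r, HasFDerivAt (fun u => Θ (u, x.2)) (0 : F →L[ℝ] H) u := by
    intro u hu
    obtain ⟨hdiff, hflat⟩ := hball (ball_prod_same x₀.1 x₀.2 r ▸ mk_mem_prod hu hx.2)
    have hzero : (fderiv ℝ Θ (u, x.2)).comp (ContinuousLinearMap.inl ℝ F G) = 0 :=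
      ContinuousLinearMap.ext hflat
    exact hzero ▸ hdiff.hasFDerivAt.comp u (hasFDerivAt_prodMk_left u x.2)
  refine (convex_ball x₀.1 r).is_const_of_fderivWithin_eq_zero
    (fun u hu => (hslice u hu).differentiableAt.differentiableWithinAt) (fun u hu => ?_) hx.1
    (mem_ball_self hr)
  rw [fderivWithin_of_isOpen isOpen_ball hu, (hslice u hu).fderiv]

section FunctionalDependence

variable {E F G H : Type*} [NormedAddCommGroup E] [NormedSpace ℝ E] [NormedAddCommGroup F]
  [NormedSpace ℝ F] [NormedAddCommGroup G] [NormedSpace ℝ G] [NormedAddCommGroup H]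
  [NormedSpace ℝ H]

theorem fderiv_comp_apply_mk_zero_eq_zero {f : E → G} {g : E → H} {Ψ : F × G → E}
    {x : F × G} (hΨ : DifferentiableAt ℝ Ψ x) (hf : DifferentiableAt ℝ f (Ψ x))
    (hg : DifferentiableAt ℝ g (Ψ x)) (hfΨ : f ∘ Ψ =ᶠ[𝓝 x] Prod.snd)
    (hker : ∀ w, fderiv ℝ f (Ψ x) w = 0 → fderiv ℝ g (Ψ x) w = 0) (v : F) :
    fderiv ℝ (g ∘ Ψ) x (v, 0) = 0 := by
  have hsnd : (fderiv ℝ f (Ψ x)).comp (fderiv ℝ Ψ x) = ContinuousLinearMap.snd ℝ F G := by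
    rw [← fderiv_comp x hf hΨ, hfΨ.fderiv_eq, fderiv_snd]
  rw [fderiv_comp x hg hΨ]
  exact hker _ (by simpa using congrArg (fun L => L (v, 0)) hsnd)

variable [CompleteSpace E] [CompleteSpace F] [CompleteSpace G] [HasContDiffBump G]

theorem exists_contDiff_eventuallyEq_comp_of_ker_fderiv_le {π : E → F} {f : E → G} {g : E → H}
    {p : E} (hπ : ContDiffAt ℝ 1 π p) (hf : ContDiffAt ℝ 1 f p) (hg : ContDiffAt ℝ 1 g p)
    (hchart : Function.Bijective ((fderiv ℝ π p).prod (fderiv ℝ f p)))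
    (hker : ∀ᶠ q in 𝓝 p, ∀ w, fderiv ℝ f q w = 0 → fderiv ℝ g q w = 0) :
    ∃ h : G → H, ContDiff ℝ 1 h ∧ g =ᶠ[𝓝 p] h ∘ f := by
  set Φ : E → F × G := fun q => (π q, f q)
  have hΦ : ContDiffAt ℝ 1 Φ p := hπ.prodMk hf
  let e : E ≃L[ℝ] F × G := .ofBijective _ (LinearMap.ker_eq_bot.2 hchart.1)
    (LinearMap.range_eq_top.2 hchart.2)
  have hΦ' : HasFDerivAt Φ (e : E →L[ℝ] F × G) p :=
    (hπ.differentiableAt one_ne_zero).hasFDerivAt.prodMk (hf.differentiableAt one_ne_zero).hasFDerivAt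
  set Ψ := hΦ.localInverse hΦ' one_ne_zero
  have hΨ : ContDiffAt ℝ 1 Ψ (Φ p) := hΦ.to_localInverse hΦ' one_ne_zero
  have hΨp : Ψ (Φ p) = p := hΦ.localInverse_apply_image hΦ' one_ne_zero
  have hΨ_tendsto : Tendsto Ψ (𝓝 (Φ p)) (𝓝 p) := by
    simpa only [ContinuousAt, hΨp] using hΨ.continuousAt
  have hflat : ∀ᶠ y in 𝓝 (Φ p),
      DifferentiableAt ℝ (g ∘ Ψ) y ∧ ∀ v : F, fderiv ℝ (g ∘ Ψ) y (v, 0) = 0 := by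
    filter_upwards [hΨ.eventually (by simp), hΨ_tendsto.eventually (hf.eventually (by simp)),
      hΨ_tendsto.eventually (hg.eventually (by simp)), hΨ_tendsto.eventually hker,
      (hΦ.hasStrictFDerivAt' hΦ' one_ne_zero).eventually_right_inverse.eventually_nhds]
      with y hΨy hfy hgy hkery hΦΨ
    have hΨy' := hΨy.differentiableAt one_ne_zero
    refine ⟨(hgy.differentiableAt one_ne_zero).comp y hΨy', ?_⟩
    exact fderiv_comp_apply_mk_zero_eq_zero hΨy' (hfy.differentiableAt one_ne_zero)
      (hgy.differentiableAt one_ne_zero) (hΦΨ.mono fun z hz => congrArg Prod.snd hz) hkery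
  have hslice : ContDiffAt ℝ 1 (fun t => g (Ψ (π p, t))) (f p) :=
    (hΨp ▸ hg).comp (f p) (hΨ.comp (f p) (contDiffAt_const.prodMk contDiffAt_id))
  obtain ⟨h, hh, hh_eq⟩ := hslice.exists_contDiff_eventuallyEq
  refine ⟨h, hh, ?_⟩
  filter_upwards [(hΦ.hasStrictFDerivAt' hΦ' one_ne_zero).eventually_left_inverse,
    hΦ.continuousAt.eventually (eventually_eq_apply_mk_of_fderiv_fst_eq_zero hflat),
    hf.continuousAt.eventually hh_eq] with q hΨΦ hconst hhq
  calc g q = g (Ψ (Φ q)) := congrArg g hΨΦ.symm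
    _ = g (Ψ (π p, f q)) := hconst
    _ = h (f q) := hhq.symm

end FunctionalDependence

section Plane

open ContinuousLinearMap

theorem ContinuousLinearMap.apply_eq_fst_mul_add_snd_mul (L : ℝ × ℝ →L[ℝ] ℝ) (w : ℝ × ℝ) :
    L w = w.1 * L (1, 0) + w.2 * L (0, 1) := by
  conv_lhs => rw [show w = w.1 • ((1 : ℝ), (0 : ℝ)) + w.2 • ((0 : ℝ), (1 : ℝ)) by ext <;> simp]
  rw [map_add, map_smul, map_smul, smul_eq_mul, smul_eq_mul]

variable {L M : ℝ × ℝ →L[ℝ] ℝ}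

theorem apply_eq_zero_of_apply_eq_zero_of_det_eq_zero (hL : L (1, 0) ≠ 0 ∨ L (0, 1) ≠ 0)
    (hdet : L (1, 0) * M (0, 1) - L (0, 1) * M (1, 0) = 0) {w : ℝ × ℝ} (hw : L w = 0) :
    M w = 0 := by
  rw [L.apply_eq_fst_mul_add_snd_mul] at hw
  rw [M.apply_eq_fst_mul_add_snd_mul]
  rcases hL with hL | hL
  · refine (mul_eq_zero.1 ?_).resolve_left hL
    linear_combination M (1, 0) * hw + w.2 * hdet
  · refine (mul_eq_zero.1 ?_).resolve_left hL
    linear_combination M (0, 1) * hw - w.1 * hdet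

-- The determinant of this map is `-(L (1, 0) ^ 2 + L (0, 1) ^ 2)`.
theorem bijective_rotate_prod (hL : L (1, 0) ≠ 0 ∨ L (0, 1) ≠ 0) :
    Function.Bijective ((L (1, 0) • snd ℝ ℝ ℝ - L (0, 1) • fst ℝ ℝ ℝ).prod L) := by
  have hinj : Function.Injective ((L (1, 0) • snd ℝ ℝ ℝ - L (0, 1) • fst ℝ ℝ ℝ).prod L) := by
    rw [injective_iff_map_eq_zero]
    intro w hw
    have h₁ : L (1, 0) * w.2 - L (0, 1) * w.1 = 0 := by simpa using congrArg Prod.fst hw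
    have h₂ : w.1 * L (1, 0) + w.2 * L (0, 1) = 0 := by
      rw [← L.apply_eq_fst_mul_add_snd_mul]; exact congrArg Prod.snd hw
    have hnorm : L (1, 0) ^ 2 + L (0, 1) ^ 2 ≠ 0 := by
      rcases hL with hL | hL <;> positivity
    ext
    · exact (mul_eq_zero.1 (by linear_combination L (1, 0) * h₂ - L (0, 1) * h₁ :
        (L (1, 0) ^ 2 + L (0, 1) ^ 2) * w.1 = 0)).resolve_left hnorm
    · exact (mul_eq_zero.1 (by linear_combination L (0, 1) * h₂ + L (1, 0) * h₁ :
        (L (1, 0) ^ 2 + L (0, 1) ^ 2) * w.2 = 0)).resolve_left hnorm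
  exact ⟨hinj, LinearMap.injective_iff_surjective.1 hinj⟩

end Plane

/-- If `α¹` satisfies the homogeneous magnetic differential equation
`α⁰_y α¹_z − α⁰_z α¹_y = 0` on an open set `U` and `∇α⁰ ≠ 0` at `p ∈ U`, then locally
`α¹` is a continuously differentiable function of `α⁰` (Eq. (5.13) of the paper). -/
theorem statement13 (U : Set (ℝ × ℝ)) (hU : IsOpen U)
    (α0 α1 : ℝ × ℝ → ℝ)
    (hα0 : ContDiffOn ℝ 1 α0 U) (hα1 : ContDiffOn ℝ 1 α1 U)
    (p : ℝ × ℝ) (hp : p ∈ U)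
    (hnz : pdy2 α0 p ≠ 0 ∨ pdz2 α0 p ≠ 0)
    (hjac : ∀ q ∈ U, pdy2 α0 q * pdz2 α1 q - pdz2 α0 q * pdy2 α1 q = 0) :
    ∃ V : Set (ℝ × ℝ), IsOpen V ∧ V ⊆ U ∧ p ∈ V ∧
      ∃ h : ℝ → ℝ, ContDiff ℝ 1 h ∧ ∀ q ∈ V, α1 q = h (α0 q) := by
  have hα0p : ContDiffAt ℝ 1 α0 p := hα0.contDiffAt (hU.mem_nhds hp)
  have hdα0 : ContinuousAt (fderiv ℝ α0) p := hα0p.continuousAt_fderiv one_ne_zero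
  have hgrad : ∀ᶠ q in 𝓝 p, pdy2 α0 q ≠ 0 ∨ pdz2 α0 q ≠ 0 := by
    rcases hnz with h | h
    · exact ((hdα0.clm_apply continuousAt_const).eventually_ne h).mono fun _ => Or.inl
    · exact ((hdα0.clm_apply continuousAt_const).eventually_ne h).mono fun _ => Or.inr
  have hker : ∀ᶠ q in 𝓝 p, ∀ w, fderiv ℝ α0 q w = 0 → fderiv ℝ α1 q w = 0 := by
    filter_upwards [hgrad, hU.mem_nhds hp] with q hq hqU _
    exact apply_eq_zero_of_apply_eq_zero_of_det_eq_zero hq (hjac q hqU)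
  set ℓ : ℝ × ℝ →L[ℝ] ℝ := pdy2 α0 p • .snd ℝ ℝ ℝ - pdz2 α0 p • .fst ℝ ℝ ℝ
  obtain ⟨h, hh, hα1h⟩ := exists_contDiff_eventuallyEq_comp_of_ker_fderiv_le
    ℓ.contDiff.contDiffAt hα0p (hα1.contDiffAt (hU.mem_nhds hp))
    (by rw [ℓ.fderiv]; exact bijective_rotate_prod hnz) hker
  obtain ⟨V, hVα1, hV, hpV⟩ := _root_.eventually_nhds_iff.1 hα1h
  exact ⟨V ∩ U, hV.inter hU, inter_subset_right, ⟨hpV, hp⟩, h, hh, fun q hq => hVα1 q hq.1⟩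
end
end
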